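/- The availability of the 1GnB buffer satisfies A(q) ≤ p*/(p* + p_con) for every q ∈ [0,1], and the bound is tight: A(0) = p*/(p* + p_con). -/

import Mathlib

noncomputable def wgt (n : ℕ) (p : ℝ) (k : ℕ) : ℝ :=
  (n.choose k : ℝ) * p ^ k * (1 - p) ^ (n - k)

noncomputable def agg (n : ℕ) (p : ℝ) (f : ℕ → ℝ) : ℝ :=
  ∑ k ∈ Finset.Icc 1 n, f k * wgt n p k

def Admissible (n : ℕ) (a b c d : ℕ → ℝ) : Prop :=
  ∀ k ∈ Finset.Icc 1 n,
    (0 ≤ d k ∧ d k ≤ 1) ∧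
    (-(4/3) * d k ≤ c k ∧ c k ≤ (4/3) * (1 - d k)) ∧
    (0 ≤ b k ∧ b k ≤ (3/4) * d k) ∧
    (-(4/3) * b k ≤ a k ∧ a k ≤ -(4/3) * b k + (3/4) * c k + d k)

lemma wgt_nonneg {n : ℕ} {p : ℝ} (hp0 : 0 ≤ p) (hp1 : p ≤ 1) (k : ℕ) :
    0 ≤ wgt n p k := by
  have h : (0:ℝ) ≤ 1 - p := by linarith
  unfold wgt
  positivity

lemma agg_mono {n : ℕ} {p : ℝ} (hp0 : 0 ≤ p) (hp1 : p ≤ 1) {f g : ℕ → ℝ}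
    (h : ∀ k ∈ Finset.Icc 1 n, f k ≤ g k) : agg n p f ≤ agg n p g :=
  Finset.sum_le_sum fun k hk =>
    mul_le_mul_of_nonneg_right (h k hk) (wgt_nonneg hp0 hp1 k)

lemma agg_lin3 (n : ℕ) (p x y z : ℝ) (f g h : ℕ → ℝ) :
    agg n p (fun k => x * f k + y * g k + z * h k)
      = x * agg n p f + y * agg n p g + z * agg n p h := by
  simp only [agg, Finset.mul_sum, ← Finset.sum_add_distrib]
  exact Finset.sum_congr rfl fun k _ => by ring

lemma sum_wgt (n : ℕ) (p : ℝ) :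
    ∑ k ∈ Finset.Icc 1 n, wgt n p k = 1 - (1 - p) ^ n := by
  have h1 : ∑ k ∈ Finset.range (n + 1), wgt n p k = 1 := by
    rw [show (1:ℝ) = (p + (1-p))^n by ring_nf]
    rw [add_pow]
    exact Finset.sum_congr rfl fun k _ => by unfold wgt; ring
  have h2 : Finset.range (n + 1) = insert 0 (Finset.Icc 1 n) := by
    ext k
    simp [Nat.lt_succ_iff, Nat.one_le_iff_ne_zero]
    omega
  rw [h2, Finset.sum_insert (by simp)] at h1
  have h0 : wgt n p 0 = (1 - p) ^ n := by simp [wgt]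
  linarith

/-- The availability satisfies `A(q) ≤ p*/(p* + p_con)` for every
`q ∈ [0,1]`, and the bound is tight: `A(0) = p*/(p* + p_con)`. -/
theorem availability_upper_bound
    (n : ℕ) (hn : 1 ≤ n) (p : ℝ) (hp : p ∈ Set.Ioc (0:ℝ) 1)
    (a b c d : ℕ → ℝ) (hadm : Admissible n a b c d)
    (pcon Γ γ H : ℝ) (hpcon : pcon ∈ Set.Ioc (0:ℝ) 1) (hΓ : 0 ≤ Γ)
    (hγ : γ = Real.exp Γ - 1) (hH : H ∈ Set.Icc (0:ℝ) (3/4))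
    (P aa bb cc dd ε ε' δ δ' δ'' : ℝ)
    (hP : P = 1 - (1 - p) ^ n)
    (haa : aa = agg n p a) (hbb : bb = agg n p b)
    (hcc : cc = agg n p c) (hdd : dd = agg n p d)
    (hε : ε = γ + pcon)
    (hε' : ε' = (1 - pcon) * (P - aa + H * cc))
    (hδ : δ = (γ + pcon) * pcon)
    (hδ' : δ' = (1 - pcon) * (γ * P + 2 * pcon * P - pcon * aa - (γ + pcon) * dd))
    (hδ'' : δ'' = (1 - pcon) ^ 2 * (P ^ 2 - P * aa - P * dd + aa * dd - bb * cc))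
    (Eocc Av : ℝ → ℝ)
    (hE : ∀ q, Eocc q = (ε + ε' * q) / (δ + δ' * q + δ'' * q ^ 2))
    (hA : ∀ q, Av q = P * Eocc q / (1 + P * Eocc q))
    : (∀ q ∈ Set.Icc (0:ℝ) 1, Av q ≤ P / (P + pcon)) ∧
      Av 0 = P / (P + pcon) := by
  obtain ⟨hp0, hp1⟩ := hp
  obtain ⟨hpc0, hpc1⟩ := hpcon
  obtain ⟨hH0, hH1⟩ := hH
  have hp0' : (0:ℝ) ≤ p := le_of_lt hp0
  have hγ0 : 0 ≤ γ := by
    rw [hγ]; have := Real.one_le_exp hΓ; linarith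
  -- P > 0
  have hP0 : 0 < P := by
    rw [hP]
    have h1p : (1 - p) ^ n < 1 := by
      apply pow_lt_one₀ (by linarith) (by linarith) (by omega)
    linarith
  -- one-agg = P
  have hone : agg n p (fun _ => 1) = P := by
    rw [hP, ← sum_wgt n p]
    exact Finset.sum_congr rfl fun k _ => by simp
  -- aggregated constraints
  have hzero : agg n p (fun _ => (0:ℝ)) = 0 := by simp [agg]
  have hd0 : 0 ≤ dd := by
    have h := agg_mono hp0' hp1 (n := n) (f := fun _ => (0:ℝ)) (g := d)
      fun k hk => (hadm k hk).1.1
    rw [hzero] at h; rw [hdd]; exact h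
  have hb0 : 0 ≤ bb := by
    have h := agg_mono hp0' hp1 (n := n) (f := fun _ => (0:ℝ)) (g := b)
      fun k hk => (hadm k hk).2.2.1.1
    rw [hzero] at h; rw [hbb]; exact h
  have hdP : dd ≤ P := by
    have : agg n p d ≤ agg n p (fun _ => 1) :=
      agg_mono hp0' hp1 fun k hk => (hadm k hk).1.2
    rw [hone] at this; rw [hdd]; exact this
  have hcub : cc ≤ (4/3) * P - (4/3) * dd := by
    have h := agg_mono hp0' hp1 (n := n) (f := c)
      (g := fun k => (4/3) * (fun _ => (1:ℝ)) k + (-(4/3)) * d k + 0 * d k)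
      (fun k hk => by
        have := (hadm k hk).2.1.2
        simp only
        linarith)
    rw [agg_lin3, hone] at h
    rw [hcc, hdd]; linarith
  have hbub : bb ≤ (3/4) * dd := by
    have h := agg_mono hp0' hp1 (n := n) (f := b)
      (g := fun k => (3/4) * d k + 0 * d k + 0 * d k)
      (fun k hk => by
        have := (hadm k hk).2.2.1.2
        linarith)
    rw [agg_lin3] at h
    rw [hbb, hdd]; linarith
  have haub : aa ≤ -(4/3) * bb + (3/4) * cc + dd := by
    have h := agg_mono hp0' hp1 (n := n) (f := a)
      (g := fun k => (-(4/3)) * b k + (3/4) * c k + 1 * d k)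
      (fun k hk => by
        have := (hadm k hk).2.2.2.2
        linarith)
    rw [agg_lin3] at h
    rw [haa, hbb, hcc, hdd]; linarith
  -- key nonneg quantities
  have hT1 : 0 ≤ (γ + pcon) * (P - dd) - pcon * H * cc := by
    rcases le_or_gt 0 cc with h | h
    · have e0 : H * cc ≤ (3/4) * cc := mul_le_mul_of_nonneg_right hH1 h
      have e1 : pcon * (H * cc) ≤ pcon * (P - dd) :=
        mul_le_mul_of_nonneg_left (by linarith) hpc0.le
      have e2 : pcon * (P - dd) ≤ (γ + pcon) * (P - dd) :=
        mul_le_mul_of_nonneg_right (by linarith) (by linarith)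
      linarith [e1, e2, mul_assoc pcon H cc]
    · have e1 : pcon * H * cc ≤ 0 :=
        mul_nonpos_of_nonneg_of_nonpos (by positivity) h.le
      have e2 : 0 ≤ (γ + pcon) * (P - dd) :=
        mul_nonneg (by linarith) (by linarith)
      linarith
  have hT2 : 0 ≤ (P - aa) * (P - dd) - bb * cc := by
    rcases le_or_gt 0 cc with h | h
    · have h1 : (4/3) * bb ≤ P - aa := by linarith
      have h2 : (3/4) * cc ≤ P - dd := by linarith
      have h3 := mul_le_mul h1 h2 (by linarith : (0:ℝ) ≤ (3/4) * cc)
        (by linarith : (0:ℝ) ≤ P - aa)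
      have h4 : (4/3) * bb * ((3/4) * cc) = bb * cc := by ring
      linarith [h3]
    · have h1 : 0 ≤ P - aa := by linarith
      have h2 : bb * cc ≤ 0 := mul_nonpos_of_nonneg_of_nonpos hb0 h.le
      have h3 : 0 ≤ (P - aa) * (P - dd) := mul_nonneg h1 (by linarith)
      linarith
  have hε'0 : 0 ≤ ε' := by
    rw [hε']
    apply mul_nonneg (by linarith)
    rcases le_or_gt 0 cc with h | h
    · have h1 : 0 ≤ H * cc := mul_nonneg hH0 h
      linarith
    · have h1 : (3/4) * cc ≤ H * cc := mul_le_mul_of_nonpos_right hH1 h.le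
      linarith
  -- main bound for a fixed q
  have main : ∀ q ∈ Set.Icc (0:ℝ) 1, Av q ≤ P / (P + pcon) := by
    intro q hq
    obtain ⟨hq0, hq1⟩ := hq
    have hnum : 0 < ε + ε' * q := by
      have := mul_nonneg hε'0 hq0
      rw [hε]; linarith
    have hkey : pcon * (ε + ε' * q) ≤ δ + δ' * q + δ'' * q ^ 2 := by
      have hid : δ + δ' * q + δ'' * q ^ 2 - pcon * (ε + ε' * q)
          = q * ((1 - pcon) * ((γ + pcon) * (P - dd) - pcon * H * cc))
            + q ^ 2 * ((1 - pcon) ^ 2 * ((P - aa) * (P - dd) - bb * cc)) := by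
        rw [hε, hε', hδ, hδ', hδ'']; ring
      have t1 : 0 ≤ q * ((1 - pcon) * ((γ + pcon) * (P - dd) - pcon * H * cc)) :=
        mul_nonneg hq0 (mul_nonneg (by linarith) hT1)
      have t2 : 0 ≤ q ^ 2 * ((1 - pcon) ^ 2 * ((P - aa) * (P - dd) - bb * cc)) :=
        mul_nonneg (sq_nonneg q) (mul_nonneg (sq_nonneg _) hT2)
      linarith
    have hD : 0 < δ + δ' * q + δ'' * q ^ 2 := lt_of_lt_of_le (by positivity) hkey
    have hE0 : 0 ≤ Eocc q := by
      rw [hE q]; exact div_nonneg hnum.le hD.le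
    have hEle : Eocc q * pcon ≤ 1 := by
      rw [hE q, div_mul_eq_mul_div, div_le_one hD]
      linarith
    rw [hA q]
    have h1 : 0 < 1 + P * Eocc q := by
      have := mul_nonneg hP0.le hE0
      linarith
    rw [div_le_div_iff₀ h1 (by linarith)]
    have hm : P * (Eocc q * pcon) ≤ P * 1 := mul_le_mul_of_nonneg_left hEle hP0.le
    have hexp : P * (1 + P * Eocc q) - P * Eocc q * (P + pcon)
        = P * 1 - P * (Eocc q * pcon) := by ring
    linarith
  refine ⟨main, ?_⟩
  have hE0 : Eocc 0 = 1 / pcon := by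
    have hden : δ + δ' * 0 + δ'' * 0 ^ 2 = pcon * (γ + pcon) := by rw [hδ]; ring
    have hnum : ε + ε' * 0 = γ + pcon := by rw [hε]; ring
    rw [hE 0, hden, hnum, div_eq_div_iff (by positivity) (ne_of_gt hpc0)]
    ring
  rw [hA 0, hE0]
  have h2 : P + pcon ≠ 0 := by positivity
  have h3 : (1:ℝ) + P * (1 / pcon) ≠ 0 := by positivity
  have hc : pcon * (1 / pcon) = 1 := mul_one_div_cancel (ne_of_gt hpc0)
  rw [div_eq_div_iff h3 h2]
  linear_combination P * hc
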